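/- arXiv:2003.00412 — 13 statements merged into one kernel-verified Lean document; each statement's English description precedes it below -/
import Mathlib

section
/- Let R be a commutative ring, S a multiplicatively closed subset of R, M an R-module, and N a submodule of M with √(Ann_R(N)) ∩ S = ∅. Then the following are equivalent: (a) there exists s ∈ S such that for each r ∈ R, either s·r·N = s·N or (s·r)^t·N = 0 for some natural number t ≥ 1; (b) there exists s ∈ S such that whenever r·N ⊆ K for r ∈ R and a submodule K of M, then either (r·s)^t·N = 0 for some t ≥ 1 or s·N ⊆ K. -/
open Pointwise

/-- A multiplicatively closed subset of `R`: `0 ∉ S`, `1 ∈ S`, closed under products. -/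
def MultClosedSet {R : Type*} [CommRing R] (S : Set R) : Prop :=
  (0 : R) ∉ S ∧ (1 : R) ∈ S ∧ ∀ a ∈ S, ∀ b ∈ S, a * b ∈ S

/-- `N` is an `S`-secondary submodule of `M`. -/
def IsSSecondary {R : Type*} [CommRing R] {M : Type*} [AddCommGroup M] [Module R M]
    (S : Set R) (N : Submodule R M) : Prop :=
  ((N.annihilator.radical : Set R) ∩ S = ∅) ∧
    ∃ s ∈ S, ∀ r : R, (s * r) • N = s • N ∨ ∃ t : ℕ, 1 ≤ t ∧ ((s * r) ^ t) • N = ⊥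

/-- `N` is a secondary submodule of `M`. -/
def IsSecondary {R : Type*} [CommRing R] {M : Type*} [AddCommGroup M] [Module R M]
    (N : Submodule R M) : Prop :=
  N ≠ ⊥ ∧ ∀ r : R, r • N = N ∨ ∃ t : ℕ, 1 ≤ t ∧ (r ^ t) • N = ⊥

theorem stmt_0 {R : Type*} [CommRing R] {M : Type*} [AddCommGroup M] [Module R M]
    (S : Set R) (hS : MultClosedSet S) (N : Submodule R M)
    (hdisj : ((N.annihilator.radical : Set R) ∩ S = ∅)) :
    (∃ s ∈ S, ∀ r : R, (s * r) • N = s • N ∨ ∃ t : ℕ, 1 ≤ t ∧ ((s * r) ^ t) • N = ⊥) ↔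
    (∃ s ∈ S, ∀ (r : R) (K : Submodule R M), r • N ≤ K →
      (∃ t : ℕ, 1 ≤ t ∧ ((r * s) ^ t) • N = ⊥) ∨ s • N ≤ K) := by
  constructor
  · rintro ⟨s, hs, h⟩
    refine ⟨s, hs, fun r K hrK => ?_⟩
    rcases h r with heq | ⟨t, ht, h0⟩
    · right
      rw [← heq]
      intro x hx
      obtain ⟨n, hn, rfl⟩ := Set.mem_smul_set.mp hx
      rw [mul_smul]
      exact K.smul_mem s (hrK (Submodule.smul_mem_pointwise_smul n r N hn))
    · exact Or.inl ⟨t, ht, by rwa [mul_comm r s]⟩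
  · rintro ⟨s, hs, h⟩
    refine ⟨s * s, hS.2.2 s hs s hs, fun r => ?_⟩
    rcases h (s * r) ((s * r) • N) le_rfl with ⟨t, ht, h0⟩ | hle
    · refine Or.inr ⟨t, ht, ?_⟩
      have : s * r * s = s * s * r := by ring
      rwa [this] at h0
    · left
      apply le_antisymm
      · intro x hx
        obtain ⟨n, hn, rfl⟩ := Set.mem_smul_set.mp hx
        have : (s * s * r) • n = (s * s) • (r • n) := by rw [mul_smul]
        rw [this]
        exact Submodule.smul_mem_pointwise_smul _ _ _ (N.smul_mem r hn)
      · intro x hx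
        obtain ⟨n, hn, rfl⟩ := Set.mem_smul_set.mp hx
        have hsn : s • n ∈ (s * r) • N :=
          hle (Submodule.smul_mem_pointwise_smul n s N hn)
        obtain ⟨m, hm, hm'⟩ := Set.mem_smul_set.mp hsn
        have : (s * s) • n = (s * s * r) • m := by
          rw [show s * s * r = s * (s * r) by ring, mul_smul s (s * r) m, hm', mul_smul]
        rw [this]
        exact Submodule.smul_mem_pointwise_smul m _ N hm
end

section
/- Let R be a commutative ring, S a multiplicatively closed subset of R, M an R-module, and N a submodule of M with √(Ann_R(N)) ∩ S = ∅. Then N is an S-secondary submodule of M (i.e., there exists s ∈ S such that for each r ∈ R, either s·r·N = s·N or (s·r)^t·N = 0 for some t ≥ 1) if and only if there exists s ∈ S such that for every ideal J of R and every submodule K of M with J·N ⊆ K, either s·J ⊆ √(Ann_R(N)) or s·N ⊆ K. -/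
open Pointwise

private lemma smul_eq_bot_iff_ann {R : Type*} [CommRing R] {M : Type*} [AddCommGroup M]
    [Module R M] (r : R) (N : Submodule R M) : r • N = ⊥ ↔ r ∈ N.annihilator := by
  constructor
  · intro h
    rw [Submodule.mem_annihilator]
    intro n hn
    have : r • n ∈ r • N := Submodule.smul_mem_pointwise_smul n r N hn
    rw [h] at this
    simpa using this
  · intro h
    rw [eq_bot_iff]
    intro x hx
    obtain ⟨n, hn, rfl⟩ := Set.mem_smul_set.mp hx
    simpa using Submodule.mem_annihilator.mp h n hn

private lemma smul_le_self' {R : Type*} [CommRing R] {M : Type*} [AddCommGroup M]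
    [Module R M] (r : R) (N : Submodule R M) : r • N ≤ N := by
  intro x hx
  obtain ⟨n, hn, rfl⟩ := Set.mem_smul_set.mp hx
  exact N.smul_mem r hn

theorem stmt_1 {R : Type*} [CommRing R] {M : Type*} [AddCommGroup M] [Module R M]
    (S : Set R) (hS : MultClosedSet S) (N : Submodule R M)
    (hdisj : ((N.annihilator.radical : Set R) ∩ S = ∅)) :
    IsSSecondary S N ↔
    (∃ s ∈ S, ∀ (J : Ideal R) (K : Submodule R M), J • N ≤ K →
      (∀ j ∈ J, s * j ∈ N.annihilator.radical) ∨ s • N ≤ K) := by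
  constructor
  · rintro ⟨-, s, hsS, hsec⟩
    refine ⟨s, hsS, fun J K hJK => ?_⟩
    by_cases hrad : ∀ j ∈ J, s * j ∈ N.annihilator.radical
    · exact Or.inl hrad
    · push_neg at hrad
      obtain ⟨j, hjJ, hjrad⟩ := hrad
      rcases hsec j with heq | ⟨t, ht, hbot⟩
      · refine Or.inr ?_
        rw [← heq]
        intro x hx
        obtain ⟨n, hn, rfl⟩ := Set.mem_smul_set.mp hx
        have h1 : (s * j) • n = s • (j • n) := by rw [mul_smul]
        rw [h1]
        exact K.smul_mem s (hJK (Submodule.smul_mem_smul hjJ hn))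
      · exact absurd ⟨t, (smul_eq_bot_iff_ann _ N).mp hbot⟩ hjrad
  · rintro ⟨s, hsS, h⟩
    refine ⟨hdisj, s * s, hS.2.2 s hsS s hsS, fun r => ?_⟩
    rcases h (Ideal.span {s * r}) ((s * r) • N)
        (le_of_eq (Submodule.ideal_span_singleton_smul (s * r) N)) with hrad | hle
    · have hm : s * (s * r) ∈ N.annihilator.radical :=
        hrad (s * r) (Ideal.mem_span_singleton_self _)
      obtain ⟨n, hn⟩ := hm
      refine Or.inr ⟨n + 1, Nat.le_add_left 1 n, ?_⟩
      rw [smul_eq_bot_iff_ann]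
      have : (s * s * r) ^ (n + 1) = (s * (s * r)) ^ n * (s * (s * r)) := by
        rw [← pow_succ]; ring
      rw [this]
      exact Ideal.mul_mem_right _ _ hn
    · refine Or.inl (le_antisymm ?_ ?_)
      · have h1 : (s * s * r) • N = (s * s) • (r • N) := mul_smul _ _ _
        rw [h1]
        intro x hx
        obtain ⟨n, hn, rfl⟩ := Set.mem_smul_set.mp hx
        exact Submodule.smul_mem_pointwise_smul _ _ _ (smul_le_self' r N hn)
      · have h1 : (s * s) • N = s • (s • N) := mul_smul _ _ _
        have h2 : (s * s * r) • N = s • ((s * r) • N) := by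
          rw [← mul_smul]; ring_nf
        rw [h1, h2]
        intro x hx
        obtain ⟨n, hn, rfl⟩ := Set.mem_smul_set.mp hx
        exact Submodule.smul_mem_pointwise_smul _ _ _ (hle hn)
end

section
/- The ℤ-module ℤ/4ℤ is not S-second but is S-secondary, where S = ℤ \ 2ℤ. -/
open Pointwise

/-- `N` is an `S`-second submodule of `M`. -/
def IsSSecond {R : Type*} [CommRing R] {M : Type*} [AddCommGroup M] [Module R M]
    (S : Set R) (N : Submodule R M) : Prop :=
  ((N.annihilator : Set R) ∩ S = ∅) ∧
    ∃ s ∈ S, ∀ r : R, (s * r) • N = s • N ∨ (s * r) • N = ⊥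

lemma mem_zsmul_top (r : ℤ) (x : ZMod 4) :
    x ∈ r • (⊤ : Submodule ℤ (ZMod 4)) ↔ ∃ y : ZMod 4, r • y = x := by
  constructor
  · rintro h
    rw [← SetLike.mem_coe, Submodule.coe_pointwise_smul] at h
    obtain ⟨y, -, hy⟩ := h
    exact ⟨y, hy⟩
  · rintro ⟨y, hy⟩
    rw [← SetLike.mem_coe, Submodule.coe_pointwise_smul]
    exact ⟨y, trivial, hy⟩

lemma odd_sq_cast (s : ℤ) (hs : ¬ (2 ∣ s)) : (s : ZMod 4) * (s : ZMod 4) = 1 := by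
  obtain ⟨k, hk⟩ : Odd s := Int.odd_iff.mpr (by omega)
  have hd : (4:ℤ) ∣ s*s - 1 := ⟨k*k+k, by rw [hk]; ring⟩
  have h := (ZMod.intCast_zmod_eq_zero_iff_dvd (s*s-1) 4).mpr hd
  push_cast at h
  linear_combination h

lemma odd_smul_top (s : ℤ) (hs : ¬ (2 ∣ s)) :
    s • (⊤ : Submodule ℤ (ZMod 4)) = ⊤ := by
  ext x
  simp only [Submodule.mem_top, iff_true, mem_zsmul_top]
  refine ⟨s • x, ?_⟩
  have h := odd_sq_cast s hs
  simp only [zsmul_eq_mul]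
  rw [← mul_assoc, h, one_mul]

theorem stmt_3 :
    ¬ IsSSecond {n : ℤ | ¬ (2 ∣ n)} (⊤ : Submodule ℤ (ZMod 4)) ∧
      IsSSecondary {n : ℤ | ¬ (2 ∣ n)} (⊤ : Submodule ℤ (ZMod 4)) := by
  constructor
  · rintro ⟨-, s, hs, h⟩
    simp only [Set.mem_setOf_eq] at hs
    have hcast : ((s * 2 : ℤ) : ZMod 4) = 2 := by
      obtain ⟨k, hk⟩ : Odd s := Int.odd_iff.mpr (by omega)
      have hd : (4:ℤ) ∣ s*2 - 2 := ⟨k, by rw [hk]; ring⟩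
      have h := (ZMod.intCast_zmod_eq_zero_iff_dvd (s*2-2) 4).mpr hd
      push_cast at h ⊢
      linear_combination h
    rcases h 2 with h1 | h1
    · rw [odd_smul_top s hs] at h1
      have h2 : (1 : ZMod 4) ∈ (s * 2 : ℤ) • (⊤ : Submodule ℤ (ZMod 4)) := by
        rw [h1]; trivial
      rw [mem_zsmul_top] at h2
      obtain ⟨y, hy⟩ := h2
      rw [zsmul_eq_mul, hcast] at hy
      revert hy
      revert y
      decide
    · have h2 : (2 : ZMod 4) ∈ (s * 2 : ℤ) • (⊤ : Submodule ℤ (ZMod 4)) := by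
        rw [mem_zsmul_top]
        exact ⟨1, by rw [zsmul_eq_mul, hcast, mul_one]⟩
      rw [h1, Submodule.mem_bot] at h2
      exact absurd h2 (by decide)
  · constructor
    · ext x
      simp only [Set.mem_inter_iff, Set.mem_empty_iff_false, iff_false, not_and,
        SetLike.mem_coe, Set.mem_setOf_eq, not_not]
      intro hx
      obtain ⟨n, hn⟩ := Ideal.mem_radical_iff.mp hx
      have h1 : (x ^ n) • (1 : ZMod 4) = 0 := by
        have := Submodule.mem_annihilator.mp hn (1 : ZMod 4) trivial
        exact this
      rw [zsmul_eq_mul, mul_one] at h1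
      push_cast at h1
      have h4 : (4:ℤ) ∣ x ^ n := by
        have := (ZMod.intCast_zmod_eq_zero_iff_dvd (x ^ n) 4).mp (by push_cast; exact h1)
        exact_mod_cast this
      have h2 : (2:ℤ) ∣ x ^ n := dvd_trans ⟨2, by norm_num⟩ h4
      exact Int.prime_two.dvd_of_dvd_pow h2
    · refine ⟨1, by simp, fun r => ?_⟩
      by_cases hr : 2 ∣ r
      · right
        refine ⟨2, one_le_two, ?_⟩
        obtain ⟨k, hk⟩ := hr
        have hc : (((1 * r) ^ 2 : ℤ) : ZMod 4) = 0 := by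
          rw [ZMod.intCast_zmod_eq_zero_iff_dvd]
          exact ⟨k*k, by rw [hk]; push_cast; ring⟩
        rw [eq_bot_iff]
        intro x hx
        rw [mem_zsmul_top] at hx
        obtain ⟨y, hy⟩ := hx
        rw [zsmul_eq_mul, hc, zero_mul] at hy
        rw [Submodule.mem_bot, ← hy]
      · left
        rw [odd_smul_top 1 (by norm_num), odd_smul_top (1 * r) (by simpa using hr)]
end

section
/- Let S be a multiplicatively closed subset of R and S* = {x ∈ R : x/1 is a unit in S⁻¹R} its saturation. A submodule N of an R-module M is S-secondary if and only if it is S*-secondary. -/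
open Pointwise

lemma aux_exists_mul_mem {R : Type*} [CommRing R] (S : Submonoid R) {s : R}
    (h : IsUnit (algebraMap R (Localization S) s)) : ∃ c : R, s * c ∈ S := by
  obtain ⟨u, hu⟩ := h
  obtain ⟨⟨a, t⟩, hv⟩ := IsLocalization.surj S ((u⁻¹ : (Localization S)ˣ) : Localization S)
  have h1 : algebraMap R (Localization S) (s * a) = algebraMap R (Localization S) t := by
    rw [map_mul, ← hu, ← hv, ← mul_assoc, u.mul_inv, one_mul]
  obtain ⟨c, hc⟩ := IsLocalization.exists_of_eq (M := S) h1
  refine ⟨a * c, ?_⟩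
  have : s * (a * c) = (c : R) * t := by
    have := hc
    ring_nf at this ⊢
    linear_combination this
  rw [this]
  exact S.mul_mem c.2 t.2

theorem stmt_7 {R : Type*} [CommRing R] {M : Type*} [AddCommGroup M] [Module R M]
    (S : Submonoid R) (h0 : (0 : R) ∉ S) (N : Submodule R M) :
    IsSSecondary (S : Set R) N ↔
      IsSSecondary {x : R | IsUnit (algebraMap R (Localization S) x)} N := by
  constructor
  · rintro ⟨hdisj, s, hsS, hs⟩
    refine ⟨?_, s, IsLocalization.map_units (Localization S) ⟨s, hsS⟩, hs⟩
    rw [Set.eq_empty_iff_forall_notMem]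
    rintro x ⟨hx, hxu⟩
    obtain ⟨c, hc⟩ := aux_exists_mul_mem S hxu
    have hmem : x * c ∈ (N.annihilator.radical : Set R) ∩ S :=
      ⟨Ideal.mul_mem_right _ _ hx, hc⟩
    rw [hdisj] at hmem; exact hmem
  · rintro ⟨hdisj, s, hsU, hs⟩
    constructor
    · rw [Set.eq_empty_iff_forall_notMem]
      rintro x ⟨hx, hxS⟩
      have hmem : x ∈ (N.annihilator.radical : Set R) ∩
          {x : R | IsUnit (algebraMap R (Localization S) x)} :=
        ⟨hx, IsLocalization.map_units (Localization S) ⟨x, hxS⟩⟩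
      rw [hdisj] at hmem; exact hmem
    · obtain ⟨c, hc⟩ := aux_exists_mul_mem S hsU
      refine ⟨s * c, hc, fun r => ?_⟩
      rcases hs (c * r) with h1 | ⟨t, ht, h1⟩
      · rcases hs c with h2 | ⟨t, ht, h2⟩
        · left
          rw [mul_assoc, h1, ← h2]
        · right
          refine ⟨t, ht, le_antisymm ?_ bot_le⟩
          rw [← h2, mul_pow, mul_smul]
          exact smul_mono_right ((s * c) ^ t) (Submodule.smul_le_self_of_tower (r ^ t) N)
      · right
        exact ⟨t, ht, by rw [mul_assoc]; exact h1⟩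
end

section
/- Let N be a finitely generated S-secondary submodule of an R-module M. Then S⁻¹N is a secondary submodule of the S⁻¹R-module S⁻¹M (i.e., S⁻¹N ≠ 0 and for every r/t ∈ S⁻¹R, either (r/t)·S⁻¹N = S⁻¹N or (r/t)^k·S⁻¹N = 0 for some k ≥ 1). -/
/-!
Localization commutes with multiplying a submodule by a ring element, and the elements of `S`
become units in `S⁻¹R`. Hence, writing `x = r/t`, both `x • S⁻¹N` and `x ^ k • S⁻¹N` are the
localizations of `r • N` and `r ^ k • N`, and the factor `s` in the `S`-secondary dichotomy for
`s * r` disappears after localizing. If `S⁻¹N` were zero, then, `N` being finitely generated, a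
single element of `S` would annihilate `N`, contradicting `√(Ann N) ∩ S = ∅`.
-/

open Pointwise

namespace Submodule

section Localization

variable {R A M M' : Type*} [CommSemiring R] [CommSemiring A] [Algebra R A]
  [AddCommMonoid M] [Module R M] [AddCommMonoid M'] [Module R M'] [Module A M']
  [IsScalarTower R A M'] (p : Submonoid R) [IsLocalization p A]
  (f : M →ₗ[R] M') [IsLocalizedModule p f]

theorem smul_eq_self_of_isUnit {u : A} (hu : IsUnit u) (L : Submodule A M') : u • L = L := by
  rw [← ideal_span_singleton_smul, Ideal.span_singleton_eq_top.mpr hu, top_smul]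

theorem localized'_pointwise_smul (c : R) (N : Submodule R M) :
    (c • N).localized' A p f = algebraMap R A c • N.localized' A p f := by
  rw [← ideal_span_singleton_smul, localized'_smul, localized'_span, Set.image_singleton,
    Algebra.linearMap_apply, ideal_span_singleton_smul]

theorem localized'_smul_of_mem {s : R} (hs : s ∈ p) (N : Submodule R M) :
    (s • N).localized' A p f = N.localized' A p f := by
  rw [localized'_pointwise_smul, smul_eq_self_of_isUnit (IsLocalization.map_units A ⟨s, hs⟩)]

theorem mk'_smul_localized' (r : R) (t : p) (N : Submodule R M) :
    IsLocalization.mk' A r t • N.localized' A p f = (r • N).localized' A p f := by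
  calc IsLocalization.mk' A r t • N.localized' A p f
      = IsLocalization.mk' A r t • algebraMap R A t • N.localized' A p f := by
        rw [smul_eq_self_of_isUnit (IsLocalization.map_units A t)]
    _ = (r • N).localized' A p f := by
        rw [smul_smul, IsLocalization.mk'_spec, localized'_pointwise_smul]

theorem exists_mem_annihilator_of_forall_exists_smul_eq_zero {N : Submodule R M} (hN : N.FG)
    (h : ∀ m ∈ N, ∃ s : p, s • m = 0) : ∃ s ∈ p, s ∈ N.annihilator := by
  classical
  obtain ⟨G, rfl⟩ := hN
  choose u hu using fun g (hg : g ∈ G) ↦ h g (subset_span hg)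
  refine ⟨_, (∏ g ∈ G.attach, u g g.2).2, (mem_annihilator_span _ _).mpr fun ⟨g, hg⟩ ↦ ?_⟩
  rw [← Finset.prod_erase_mul _ _ (Finset.mem_attach _ ⟨g, hg⟩), ← Submonoid.smul_def,
    mul_smul, hu, smul_zero]

theorem exists_mem_annihilator_of_localized'_eq_bot {N : Submodule R M} (hN : N.FG)
    (h : N.localized' A p f = ⊥) : ∃ s ∈ p, s ∈ N.annihilator :=
  exists_mem_annihilator_of_forall_exists_smul_eq_zero p hN fun m hm ↦
    (IsLocalizedModule.eq_zero_iff p f).mp <|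
      (mem_bot A).mp <| h ▸ ⟨m, hm, 1, IsLocalizedModule.mk'_one p f m⟩

end Localization

end Submodule

open Submodule in
theorem stmt_8_general {R : Type*} [CommRing R] {M : Type*} [AddCommGroup M] [Module R M]
    (S : Submonoid R) (N : Submodule R M) (hfg : N.FG)
    (h : IsSSecondary (S : Set R) N) :
    N.localized S ≠ ⊥ ∧
      ∀ x : Localization S,
        x • N.localized S = N.localized S ∨
          ∃ k : ℕ, 1 ≤ k ∧ (x ^ k) • N.localized S = ⊥ := by
  obtain ⟨hdisj, s, hs, hsec⟩ := h
  refine ⟨fun hbot ↦ ?_, fun x ↦ ?_⟩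
  · obtain ⟨u, huS, hu⟩ := exists_mem_annihilator_of_localized'_eq_bot S _ hfg hbot
    exact Set.eq_empty_iff_forall_notMem.mp hdisj u ⟨N.annihilator.le_radical hu, huS⟩
  obtain ⟨r, t, rfl⟩ := IsLocalization.exists_mk'_eq S x
  rcases hsec r with hunit | ⟨k, hk, hnil⟩
  · left
    rw [mk'_smul_localized', ← localized'_smul_of_mem S _ hs, ← mul_smul, hunit,
      localized'_smul_of_mem S _ hs]
  · right
    refine ⟨k, hk, ?_⟩
    rw [← IsLocalization.mk'_pow, mk'_smul_localized', ← localized'_smul_of_mem S _ (pow_mem hs k),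
      ← mul_smul, ← mul_pow, hnil, localized'_bot]

theorem stmt_8 {R : Type*} [CommRing R] {M : Type*} [AddCommGroup M] [Module R M]
    (S : Submonoid R) (h0 : (0 : R) ∉ S) (N : Submodule R M) (hfg : N.FG)
    (h : IsSSecondary (S : Set R) N) :
    N.localized S ≠ ⊥ ∧
      ∀ x : Localization S,
        x • N.localized S = N.localized S ∨
          ∃ k : ℕ, 1 ≤ k ∧ (x ^ k) • N.localized S = ⊥ :=
  stmt_8_general S N hfg h
end

section
/- The ℤ-module M = ℤ(p^∞) ⊕ ℤ/2ℤ (p an odd prime) is not a secondary ℤ-module, but it is an S-secondary ℤ-module for S = ℤ \ {0}. -/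
open Pointwise

/-- The Prüfer `p`-group as a `ℤ`-module: `ℤ[1/p]/ℤ`. -/
abbrev PruferModule (p : ℕ) : Type :=
  Localization.Away (p : ℤ) ⧸
    Submodule.span ℤ {(1 : Localization.Away (p : ℤ))}


lemma int_decomp (p : ℕ) (hp : p.Prime) (n : ℤ) (hn : n ≠ 0) :
    ∃ (v : ℕ) (q : ℤ), ¬ (p : ℤ) ∣ q ∧ n = (p : ℤ) ^ v * q := by
  obtain ⟨e, n', hnd, hEq⟩ := Nat.exists_eq_pow_mul_and_not_dvd
    (n := n.natAbs) (Int.natAbs_ne_zero.mpr hn) p hp.ne_one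
  rcases Int.natAbs_eq n with h | h
  · exact ⟨e, (n' : ℤ), by simpa [Int.natCast_dvd_natCast] using hnd,
      by rw [h, hEq]; push_cast; ring⟩
  · refine ⟨e, -(n' : ℤ), ?_, by rw [h, hEq]; push_cast; ring⟩
    rw [dvd_neg]
    simpa [Int.natCast_dvd_natCast] using hnd

lemma prufer_key' (p : ℕ) (hp : p.Prime) {L : Type*} [CommRing L] [Algebra ℤ L]
    [IsLocalization.Away ((p : ℤ)) L] (n : ℤ) (hn : n ≠ 0) (x : L) :
    ∃ (y : L) (m : ℤ), n • y = x + algebraMap ℤ L m := by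
  set φ := algebraMap ℤ L with hφ
  have hpu : IsUnit (φ (p : ℤ)) := IsLocalization.Away.algebraMap_isUnit (p : ℤ)
  obtain ⟨⟨a, s⟩, hx⟩ := IsLocalization.surj (Submonoid.powers (p : ℤ)) x
  obtain ⟨κ, hκ⟩ := s.2
  obtain ⟨v, q, hqd, hnEq⟩ := int_decomp p hp n hn
  have hprime : Prime (p : ℤ) := Nat.prime_iff_prime_int.mp hp
  have hcop : IsCoprime q ((p : ℤ) ^ κ) :=
    (((hprime.coprime_iff_not_dvd).mpr hqd).symm).pow_right
  obtain ⟨u, w, huw⟩ := hcop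
  have hU : IsUnit (φ ((p : ℤ) ^ (κ + v))) := by
    rw [map_pow]; exact hpu.pow _
  refine ⟨(↑hU.unit⁻¹ : L) * φ (u * a), -(w * a), ?_⟩
  apply hU.mul_left_cancel
  have hc : φ ((p:ℤ) ^ (κ + v)) * (↑hU.unit⁻¹ : L) = 1 := by
    nth_rewrite 1 [← hU.unit_spec]
    exact hU.unit.mul_inv
  have h1 : x * φ ((p:ℤ) ^ κ) = φ a := by
    rw [← hx]; simp only [hφ]; congr 1; rw [← hκ]
  have hzs : ∀ z : L, n • z = φ n * z := fun z => by
    rw [zsmul_eq_mul]; congr 1; simp [hφ]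
  rw [hzs]
  have huwL : φ u * φ q + φ w * φ ((p:ℤ)^κ) = 1 := by
    rw [← map_mul, ← map_mul, ← map_add, huw, map_one]
  have hnL : φ n = φ ((p:ℤ)^v) * φ q := by rw [← map_mul, hnEq]
  have hE : φ ((p:ℤ)^(κ+v)) = φ ((p:ℤ)^κ) * φ ((p:ℤ)^v) := by
    rw [← map_mul, ← pow_add]
  rw [map_mul, map_neg, map_mul]
  linear_combination (φ ((p:ℤ)^(κ+v)) * (↑hU.unit⁻¹ : L) * φ u * φ a) * hnL
    + (φ ((p:ℤ)^(κ+v)) * (↑hU.unit⁻¹ : L) * φ ((p:ℤ)^v) * φ a) * huwL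
    + (φ ((p:ℤ)^v) * φ a - φ ((p:ℤ)^v) * φ a * φ w * φ ((p:ℤ)^κ)) * hc
    + (- φ ((p:ℤ)^v)) * h1
    + (- x + φ w * φ a) * hE

lemma prufer_surj (p : ℕ) (hp : p.Prime) (n : ℤ) (hn : n ≠ 0) :
    Function.Surjective (fun x : PruferModule p => n • x) := by
  intro z
  obtain ⟨x, rfl⟩ := Submodule.Quotient.mk_surjective _ z
  obtain ⟨y, m, hy⟩ := prufer_key' p hp (L := Localization.Away (p : ℤ)) n hn x
  refine ⟨Submodule.Quotient.mk y, ?_⟩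
  have hmem : algebraMap ℤ (Localization.Away (p : ℤ)) m ∈
      Submodule.span ℤ {(1 : Localization.Away (p : ℤ))} := by
    apply Submodule.mem_span_singleton.mpr
    exact ⟨m, by simp [Algebra.algebraMap_eq_smul_one]⟩
  show n • Submodule.Quotient.mk y = Submodule.Quotient.mk x
  rw [← Submodule.Quotient.mk_smul, hy, Submodule.Quotient.mk_add,
    (Submodule.Quotient.mk_eq_zero _).mpr hmem, add_zero]

lemma prufer_exists_ne_zero (p : ℕ) (hp : p.Prime) :
    ∃ z : PruferModule p, z ≠ 0 := by
  have hpu : IsUnit (algebraMap ℤ (Localization.Away (p : ℤ)) (p : ℤ)) :=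
    IsLocalization.Away.algebraMap_isUnit (p : ℤ)
  have hinj : Function.Injective (algebraMap ℤ (Localization.Away (p : ℤ))) :=
    IsLocalization.injective _ (powers_le_nonZeroDivisors_of_noZeroDivisors
      (show ((p:ℤ)) ≠ 0 by exact_mod_cast hp.ne_zero))
  refine ⟨Submodule.Quotient.mk (↑hpu.unit⁻¹ : Localization.Away (p : ℤ)), ?_⟩
  intro h0
  have hmem := (Submodule.Quotient.mk_eq_zero _).mp h0
  obtain ⟨m, hm⟩ := Submodule.mem_span_singleton.mp hmem
  have hm' : algebraMap ℤ (Localization.Away (p : ℤ)) m = (↑hpu.unit⁻¹ : _) := by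
    rw [← hm]; simp [Algebra.algebraMap_eq_smul_one]
  have : algebraMap ℤ (Localization.Away (p : ℤ)) (m * p) = algebraMap ℤ _ 1 := by
    rw [map_mul, hm', map_one]
    nth_rewrite 2 [← hpu.unit_spec]
    exact hpu.unit.inv_mul
  have hmp : m * (p : ℤ) = 1 := hinj this
  have : (p : ℤ) ∣ 1 := Dvd.intro_left m hmp
  have h1 := Int.le_of_dvd one_pos this
  have h2 : (2 : ℤ) ≤ (p : ℤ) := by exact_mod_cast hp.two_le
  omega

lemma mem_psmul {R M : Type*} [CommRing R] [AddCommGroup M] [Module R M]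
    (a : R) (S : Submodule R M) (m : M) :
    m ∈ a • S ↔ ∃ s ∈ S, a • s = m := Iff.rfl

lemma zmod2_even_smul (n : ℤ) (hev : (2:ℤ) ∣ n) (b : ZMod 2) : n • b = 0 := by
  rw [zsmul_eq_mul, (ZMod.intCast_zmod_eq_zero_iff_dvd n 2).mpr (by exact_mod_cast hev), zero_mul]

lemma smul_top_eq (p : ℕ) (hp : p.Prime) (n : ℤ) (hn : n ≠ 0) (hev : (2:ℤ) ∣ n) :
    n • (⊤ : Submodule ℤ (PruferModule p × ZMod 2)) =
      (⊤ : Submodule ℤ (PruferModule p)).prod ⊥ := by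
  ext m
  rw [mem_psmul]
  constructor
  · rintro ⟨⟨a, b⟩, -, rfl⟩
    refine Submodule.mem_prod.mpr ⟨trivial, ?_⟩
    show n • b ∈ (⊥ : Submodule ℤ (ZMod 2))
    rw [zmod2_even_smul n hev b]; exact Submodule.zero_mem _
  · intro hm
    obtain ⟨h1, h2⟩ := Submodule.mem_prod.mp hm
    obtain ⟨a, ha⟩ := prufer_surj p hp n hn m.1
    refine ⟨(a, 0), trivial, ?_⟩
    have hb : m.2 = 0 := h2
    rw [Prod.smul_mk]
    rw [show n • (0 : ZMod 2) = m.2 by rw [smul_zero, hb]]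
    rw [show n • a = m.1 from ha]

lemma zero_smul_top (p : ℕ) :
    (0 : ℤ) • (⊤ : Submodule ℤ (PruferModule p × ZMod 2)) = ⊥ := by
  ext m
  simp only [mem_psmul, Submodule.mem_bot]
  constructor
  · rintro ⟨s, -, rfl⟩; simp
  · rintro rfl; exact ⟨0, trivial, by simp⟩

theorem stmt_9 (p : ℕ) (hp : p.Prime) (hodd : p ≠ 2) :
    ¬ IsSecondary (⊤ : Submodule ℤ (PruferModule p × ZMod 2)) ∧
      IsSSecondary {n : ℤ | n ≠ 0} (⊤ : Submodule ℤ (PruferModule p × ZMod 2)) := by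
  obtain ⟨z, hz⟩ := prufer_exists_ne_zero p hp
  constructor
  · rintro ⟨-, h⟩
    rcases h 2 with h2 | ⟨t, -, hbot⟩
    · have : ((0 : PruferModule p), (1 : ZMod 2)) ∈
          (2:ℤ) • (⊤ : Submodule ℤ (PruferModule p × ZMod 2)) := by rw [h2]; trivial
      obtain ⟨⟨a, b⟩, -, heq⟩ := (mem_psmul _ _ _).mp this
      have : (2:ℤ) • b = 1 := congrArg Prod.snd heq
      rw [zmod2_even_smul 2 ⟨1, by ring⟩ b] at this
      exact absurd this (by decide)
    · obtain ⟨a, ha'⟩ := prufer_surj p hp (2^t) (pow_ne_zero t two_ne_zero) z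
      have ha : (2:ℤ)^t • a = z := ha'
      have hmem : ((2:ℤ)^t) • ((a, 0) : PruferModule p × ZMod 2) ∈
          ((2:ℤ)^t) • (⊤ : Submodule ℤ (PruferModule p × ZMod 2)) :=
        Submodule.smul_mem_pointwise_smul _ _ _ trivial
      rw [hbot, Submodule.mem_bot] at hmem
      have : (2:ℤ)^t • a = 0 := congrArg Prod.fst hmem
      rw [ha] at this
      exact hz this
  · constructor
    · rw [Set.eq_empty_iff_forall_notMem]
      rintro r ⟨hrad, hr0⟩
      have hr0 : r ≠ 0 := hr0
      obtain ⟨t, hann⟩ := Ideal.mem_radical_iff.mp hrad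
      obtain ⟨a, ha'⟩ := prufer_surj p hp (r^t) (pow_ne_zero t hr0) z
      have ha : (r:ℤ)^t • a = z := ha'
      have := Submodule.mem_annihilator.mp hann ((a, 0) : PruferModule p × ZMod 2) trivial
      have : r^t • a = 0 := congrArg Prod.fst this
      rw [ha] at this
      exact hz this
    · refine ⟨2, by norm_num, fun r => ?_⟩
      rcases eq_or_ne r 0 with rfl | hr
      · exact Or.inr ⟨1, le_refl 1, by rw [mul_zero, pow_one, zero_smul_top p]⟩
      · left
        rw [smul_top_eq p hp (2*r) (mul_ne_zero two_ne_zero hr) ⟨r, rfl⟩,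
          smul_top_eq p hp 2 two_ne_zero ⟨1, by ring⟩]
end

section
/- Let N be an S-secondary submodule of an R-module M. Then there exists s ∈ S such that s·N ⊆ s'·N for all s' ∈ S. -/
open Pointwise

theorem stmt_12 {R : Type*} [CommRing R] {M : Type*} [AddCommGroup M] [Module R M]
    (S : Set R) (hS : MultClosedSet S) (N : Submodule R M)
    (h : IsSSecondary S N) :
    ∃ s ∈ S, ∀ s' ∈ S, s • N ≤ s' • N := by
  obtain ⟨hdisj, s, hsS, hsec⟩ := h
  refine ⟨s, hsS, fun s' hs'S => ?_⟩
  rcases hsec s' with heq | ⟨t, _, hbot⟩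
  · calc s • N = (s * s') • N := heq.symm
      _ = s' • (s • N) := by rw [mul_comm, mul_smul]
      _ ≤ s' • N := by
          have : s • N ≤ N := Submodule.smul_le_self_of_tower s N
          exact smul_mono_right s' this
  · exfalso
    have hmem : (s * s') ^ t ∈ N.annihilator.radical := by
      refine Ideal.le_radical ?_
      rw [Submodule.mem_annihilator]
      intro m hm
      have : (s * s') ^ t • m ∈ ((s * s') ^ t) • N :=
        Submodule.smul_mem_pointwise_smul m _ N hm
      rwa [hbot, Submodule.mem_bot] at this
    have hss' : s * s' ∈ S := hS.2.2 s hsS s' hs'S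
    have hSmem : ∀ n : ℕ, (s * s') ^ n ∈ S := by
      intro n
      induction n with
      | zero => simpa using hS.2.1
      | succ n ih =>
        rw [pow_succ]
        exact hS.2.2 _ ih _ hss'
    have : (s * s') ^ t ∈ (N.annihilator.radical : Set R) ∩ S := ⟨hmem, hSmem t⟩
    rw [hdisj] at this
    exact this
end

section
/- Let N be an S-secondary submodule of an R-module M. Then there exists s ∈ S such that (√(Ann_R(N)) : s') ⊆ (√(Ann_R(N)) : s) for all s' ∈ S, where (I : x) = {r ∈ R : r·x ∈ I}. -/
open Pointwise

lemma aux_mem_ann_of_smul_bot {R : Type*} [CommRing R] {M : Type*} [AddCommGroup M] [Module R M]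
    {N : Submodule R M} {a : R} (h : a • N = ⊥) : a ∈ N.annihilator := by
  rw [Submodule.mem_annihilator]
  intro x hx
  have := Submodule.smul_mem_pointwise_smul x a N hx
  rw [h] at this
  simpa using this

lemma aux_smul_bot_of_mem_ann {R : Type*} [CommRing R] {M : Type*} [AddCommGroup M] [Module R M]
    {N : Submodule R M} {a : R} (h : a ∈ N.annihilator) : a • N = ⊥ := by
  rw [Submodule.mem_annihilator] at h
  rw [eq_bot_iff]
  rintro x hx
  have hx' : x ∈ a • (N : Set M) := hx
  obtain ⟨y, hy, rfl⟩ := Set.mem_smul_set.mp hx'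
  simp [h y hy]

theorem stmt_13 {R : Type*} [CommRing R] {M : Type*} [AddCommGroup M] [Module R M]
    (S : Set R) (hS : MultClosedSet S) (N : Submodule R M)
    (h : IsSSecondary S N) :
    ∃ s ∈ S, ∀ s' ∈ S, ∀ r : R,
      r * s' ∈ N.annihilator.radical → r * s ∈ N.annihilator.radical := by
  obtain ⟨hdisj, s, hsS, hs⟩ := h
  refine ⟨s, hsS, fun s' hs' r hr => ?_⟩
  rcases hs r with h1 | ⟨t, _, h2⟩
  · exfalso
    obtain ⟨n, hn⟩ := hr
    have key : ∀ k : ℕ, ((s * r) ^ k) • N = (s ^ k) • N := by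
      intro k
      induction k with
      | zero => simp
      | succ k ih =>
        rw [pow_succ, pow_succ, ← smul_smul, h1, smul_smul, mul_comm _ s, ← smul_smul, ih,
          smul_smul, mul_comm]
    have hrs' : ((r * s') ^ n) • N = ⊥ := aux_smul_bot_of_mem_ann hn
    have hbot : ((s' * s) ^ n) • N = ⊥ := by
      have : (s' ^ n) • (((s * r) ^ n) • N) = ((s' * s) ^ n) • N := by
        rw [key, smul_smul, ← mul_pow]
      rw [← this, smul_smul, ← mul_pow]
      have heq : (s' * (s * r)) = s * (r * s') := by ring
      rw [heq, mul_pow, ← smul_smul, hrs']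
      simp
    have hmem : s' * s ∈ N.annihilator.radical := ⟨n, aux_mem_ann_of_smul_bot hbot⟩
    have : s' * s ∈ (N.annihilator.radical : Set R) ∩ S :=
      ⟨hmem, hS.2.2 s' hs' s hsS⟩
    rw [hdisj] at this
    exact this
  · exact ⟨t, by rw [mul_comm]; exact aux_mem_ann_of_smul_bot h2⟩
end

section
/- Let S be a multiplicatively closed subset of R and N a submodule of an R-module M with √(Ann_R(N)) ∩ S = ∅. Then N is an S-secondary submodule of M if and only if s·N is a secondary submodule of M for some s ∈ S. -/
open Pointwise

lemma smul_eq_bot_iff_mem_ann {R : Type*} [CommRing R] {M : Type*} [AddCommGroup M] [Module R M]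
    (s : R) (N : Submodule R M) : s • N = ⊥ ↔ s ∈ N.annihilator := by
  rw [eq_bot_iff, Submodule.mem_annihilator]
  constructor
  · intro h n hn
    exact (Submodule.mem_bot R).mp (h (Submodule.smul_mem_pointwise_smul n s N hn))
  · intro h m hm
    obtain ⟨n, hn, rfl⟩ := Submodule.mem_map.mp hm
    exact (Submodule.mem_bot R).mpr (h n hn)

theorem stmt_14 {R : Type*} [CommRing R] {M : Type*} [AddCommGroup M] [Module R M]
    (S : Set R) (hS : MultClosedSet S) (N : Submodule R M)
    (hdisj : ((N.annihilator.radical : Set R) ∩ S = ∅)) :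
    IsSSecondary S N ↔ ∃ s ∈ S, IsSecondary (s • N) := by
  have hdisj' : ∀ x ∈ (N.annihilator.radical : Set R), x ∉ S := by
    intro x hx hxS
    exact absurd (Set.mem_inter hx hxS) (by rw [hdisj]; exact not_false)
  constructor
  · rintro ⟨-, s, hsS, hs⟩
    refine ⟨s, hsS, ?_, ?_⟩
    · -- s • N ≠ ⊥
      intro hbot
      have : s ∈ N.annihilator.radical :=
        ⟨1, by simpa using (smul_eq_bot_iff_mem_ann s N).mp hbot⟩
      exact hdisj' s this hsS
    · -- s² • N = s • N
      have hsq : (s * s) • N = s • N := by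
        rcases hs s with h | ⟨t, ht, htb⟩
        · exact h
        · exfalso
          have : (s * s) ∈ N.annihilator.radical :=
            ⟨t, (smul_eq_bot_iff_mem_ann _ N).mp htb⟩
          exact hdisj' _ this (hS.2.2 s hsS s hsS)
      have hpow : ∀ k : ℕ, 1 ≤ k → (s ^ k) • N = s • N := by
        intro k hk
        induction k with
        | zero => omega
        | succ n ih =>
          rcases Nat.lt_or_ge n 1 with h | h
          · interval_cases n; simp
          · calc (s ^ (n + 1)) • N = s • (s ^ n) • N := by
                  rw [smul_smul, pow_succ, mul_comm]
              _ = s • s • N := by rw [ih h]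
              _ = (s * s) • N := smul_smul s s N
              _ = s • N := hsq
      intro r
      rcases hs r with h | ⟨t, ht, htb⟩
      · left
        rw [smul_smul, mul_comm r s]
        exact h
      · right
        refine ⟨t, ht, ?_⟩
        calc (r ^ t) • s • N = (r ^ t) • (s ^ t) • N := by rw [hpow t ht]
          _ = ((s * r) ^ t) • N := by rw [smul_smul, ← mul_pow, mul_comm]
          _ = ⊥ := htb
  · rintro ⟨s, hsS, hne, hsec⟩
    refine ⟨hdisj, s, hsS, ?_⟩
    intro r
    rcases hsec r with h | ⟨t, ht, htb⟩
    · left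
      rw [← h, smul_smul, mul_comm]
    · right
      refine ⟨t, ht, ?_⟩
      obtain ⟨k, rfl⟩ : ∃ k, t = k + 1 := ⟨t - 1, by omega⟩
      have key : (s * r) ^ (k + 1) = s ^ k * (r ^ (k + 1) * s) := by
        rw [mul_pow, mul_comm (r ^ (k + 1)) s, ← mul_assoc, ← pow_succ]
      rw [key, ← smul_smul, ← smul_smul, htb]
      simp
end

section
/- Let N be a submodule of an R-module M with √(Ann_R(N)) ⊆ Jac(R) (the Jacobson radical). Then N is a secondary submodule of M if and only if √(Ann_R(N)) is a prime ideal of R and N is an (R \ 𝔪)-secondary submodule of M for every maximal ideal 𝔪 of R. -/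
open Pointwise

lemma smul_submodule_eq_bot_iff {R : Type*} [CommRing R] {M : Type*} [AddCommGroup M]
    [Module R M] (a : R) (N : Submodule R M) :
    a • N = ⊥ ↔ a ∈ N.annihilator := by
  constructor
  · intro h
    rw [Submodule.mem_annihilator]
    intro n hn
    have : a • n ∈ a • N := Submodule.smul_mem_pointwise_smul n a N hn
    rw [h] at this
    exact (Submodule.mem_bot R).mp this
  · intro h
    rw [Submodule.mem_annihilator] at h
    apply le_bot_iff.mp
    intro x hx
    obtain ⟨m, hm, rfl⟩ := hx
    exact (Submodule.mem_bot R).mpr (h m hm)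

lemma pow_smul_eq_self {R : Type*} [CommRing R] {M : Type*} [AddCommGroup M]
    [Module R M] {a : R} {N : Submodule R M} (h : a • N = N) (k : ℕ) : a ^ k • N = N := by
  induction k with
  | zero => simp
  | succ n ih => rw [pow_succ, mul_smul, h, ih]

lemma jacobson_bot_le_maximal {R : Type*} [CommRing R] {m : Ideal R} (h : m.IsMaximal) :
    (⊥ : Ideal R).jacobson ≤ m :=
  sInf_le ⟨bot_le, h⟩

theorem stmt_15 {R : Type*} [CommRing R] {M : Type*} [AddCommGroup M] [Module R M]
    (N : Submodule R M)
    (hjac : N.annihilator.radical ≤ (⊥ : Ideal R).jacobson) :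
    IsSecondary N ↔
      (N.annihilator.radical.IsPrime ∧
        ∀ 𝔪 : Ideal R, 𝔪.IsMaximal → IsSSecondary ((𝔪 : Set R)ᶜ) N) := by
  constructor
  · rintro ⟨hne, hsec⟩
    have hrad_ne_top : N.annihilator.radical ≠ ⊤ := by
      rw [Ne, Ideal.radical_eq_top, Submodule.annihilator_eq_top_iff]
      exact hne
    refine ⟨⟨hrad_ne_top, ?_⟩, ?_⟩
    · intro a b hab
      by_contra hcon
      push_neg at hcon
      obtain ⟨ha, hb⟩ := hcon
      have hsm : ∀ c : R, c ∉ N.annihilator.radical → c • N = N := by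
        intro c hc
        rcases hsec c with h | ⟨t, _, h⟩
        · exact h
        · exact absurd (Ideal.mem_radical_iff.mpr
            ⟨t, (smul_submodule_eq_bot_iff _ N).mp h⟩) hc
      obtain ⟨k, hk⟩ := Ideal.mem_radical_iff.mp hab
      have : (a * b) ^ k • N = ⊥ := (smul_submodule_eq_bot_iff _ N).mpr hk
      rw [mul_pow, mul_smul, pow_smul_eq_self (hsm b hb), pow_smul_eq_self (hsm a ha)] at this
      exact hne this
    · intro m hm
      constructor
      · rw [Set.eq_empty_iff_forall_notMem]
        rintro x ⟨hx1, hx2⟩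
        exact hx2 (jacobson_bot_le_maximal hm (hjac hx1))
      · refine ⟨1, ?_, ?_⟩
        · exact fun h => hm.ne_top (Ideal.eq_top_of_isUnit_mem m h isUnit_one)
        · intro r
          rcases hsec r with h | ⟨t, ht, h⟩
          · left; rw [one_mul, one_smul]; exact h
          · right; exact ⟨t, ht, by rwa [one_mul]⟩
  · rintro ⟨hp, hsec⟩
    have hne : N ≠ ⊥ := by
      intro h
      apply hp.ne_top
      rw [Ideal.radical_eq_top, Submodule.annihilator_eq_top_iff]
      exact h
    refine ⟨hne, ?_⟩
    intro r
    by_cases hr : r ∈ N.annihilator.radical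
    · right
      obtain ⟨n, hn⟩ := Ideal.mem_radical_iff.mp hr
      refine ⟨n + 1, Nat.le_add_left 1 n, ?_⟩
      rw [smul_submodule_eq_bot_iff, pow_succ']
      exact Ideal.mul_mem_left _ r hn
    · left
      -- show r • N = N using the colon ideal
      have key : ∀ m : Ideal R, m.IsMaximal → ¬ ((r • N).colon N ≤ m) := by
        intro m hm hle
        obtain ⟨_, s, hsS, hs⟩ := hsec m hm
        rcases hs r with h | ⟨t, _, h⟩
        · apply hsS
          apply hle
          rw [Submodule.mem_colon]
          intro p hp
          have h1 : s • p ∈ s • N := Submodule.smul_mem_pointwise_smul p s N hp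
          rw [← h, mul_smul] at h1
          obtain ⟨q, hq, heq⟩ := h1
          rw [← heq]
          exact Submodule.smul_mem _ s hq
        · have hsr : s * r ∈ N.annihilator.radical :=
            Ideal.mem_radical_iff.mpr ⟨t, (smul_submodule_eq_bot_iff _ N).mp h⟩
          rcases hp.mem_or_mem hsr with h' | h'
          · exact hsS (jacobson_bot_le_maximal hm (hjac h'))
          · exact hr h'
      have hcol : (r • N).colon N = ⊤ := by
        by_contra h
        obtain ⟨m, hm, hle⟩ := Ideal.exists_le_maximal _ h
        exact key m hm hle
      apply le_antisymm (Submodule.smul_le_self_of_tower r N)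
      intro p hp
      have : (1 : R) ∈ (r • N).colon N := hcol ▸ Submodule.mem_top
      have := Submodule.mem_colon.mp this p hp
      rwa [one_smul] at this
end

section
/- Let f : M → M' be an injective R-module homomorphism and N an S-secondary submodule of M. Then f(N) is an S-secondary submodule of M'. -/
open Pointwise

private lemma ann_map_eq {R : Type*} [CommRing R] {M M' : Type*} [AddCommGroup M] [Module R M]
    [AddCommGroup M'] [Module R M'] (f : M →ₗ[R] M') (hf : Function.Injective f)
    (N : Submodule R M) : (N.map f).annihilator = N.annihilator := by
  ext r
  simp only [Submodule.mem_annihilator]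
  constructor
  · intro h m hm
    apply hf
    rw [map_smul]
    rw [map_zero]; exact h _ (Submodule.mem_map_of_mem hm)
  · rintro h _ ⟨m, hm, rfl⟩
    rw [← map_smul, h m hm, map_zero]

theorem stmt_16 {R : Type*} [CommRing R] {M M' : Type*} [AddCommGroup M] [Module R M]
    [AddCommGroup M'] [Module R M']
    (S : Set R) (hS : MultClosedSet S) (f : M →ₗ[R] M') (hf : Function.Injective f)
    (N : Submodule R M) (h : IsSSecondary S N) :
    IsSSecondary S (N.map f) := by
  obtain ⟨h1, s, hsS, hsec⟩ := h
  refine ⟨by rw [ann_map_eq f hf]; exact h1, s, hsS, fun r => ?_⟩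
  rcases hsec r with hc | ⟨t, ht, hbot⟩
  · left
    rw [← Submodule.map_pointwise_smul, ← Submodule.map_pointwise_smul, hc]
  · right
    refine ⟨t, ht, ?_⟩
    rw [← Submodule.map_pointwise_smul, hbot, Submodule.map_bot]
end

section
/- Let f : M → M' be an injective R-module homomorphism and N' an S-secondary submodule of M' with N' ⊆ f(M). Then f⁻¹(N') is an S-secondary submodule of M. -/
open Pointwise

lemma mem_psmul_aux {R : Type*} [CommRing R] {N : Type*} [AddCommGroup N] [Module R N]
    (r : R) (L : Submodule R N) (x : N) : x ∈ r • L ↔ ∃ z ∈ L, r • z = x := by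
  rw [← SetLike.mem_coe, Submodule.coe_pointwise_smul]
  exact Set.mem_smul_set

lemma map_psmul_aux {R : Type*} [CommRing R] {M M' : Type*} [AddCommGroup M] [Module R M]
    [AddCommGroup M'] [Module R M'] (f : M →ₗ[R] M') (r : R) (K : Submodule R M) :
    (r • K).map f = r • (K.map f) := by
  ext x
  simp only [Submodule.mem_map]
  constructor
  · rintro ⟨y, hy, rfl⟩
    rw [mem_psmul_aux] at hy ⊢
    obtain ⟨z, hz, rfl⟩ := hy
    exact ⟨f z, ⟨z, hz, rfl⟩, (f.map_smul r z).symm⟩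
  · intro hx
    rw [mem_psmul_aux] at hx
    obtain ⟨y, ⟨z, hz, rfl⟩, rfl⟩ := hx
    exact ⟨r • z, Submodule.smul_mem_pointwise_smul z r K hz, f.map_smul r z⟩

theorem stmt_17 {R : Type*} [CommRing R] {M M' : Type*} [AddCommGroup M] [Module R M]
    [AddCommGroup M'] [Module R M']
    (S : Set R) (hS : MultClosedSet S) (f : M →ₗ[R] M') (hf : Function.Injective f)
    (N' : Submodule R M') (h : IsSSecondary S N') (hrange : N' ≤ LinearMap.range f) :
    IsSSecondary S (N'.comap f) := by
  obtain ⟨hann, s, hsS, hs⟩ := h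
  set K := N'.comap f with hK
  have hmap : K.map f = N' := Submodule.map_comap_eq_of_le hrange
  have hinj : Function.Injective (Submodule.map f) :=
    Submodule.map_injective_of_injective hf
  have hannK : K.annihilator = N'.annihilator := by
    ext r
    simp only [Submodule.mem_annihilator]
    constructor
    · intro hr y hy
      obtain ⟨x, hx, rfl⟩ := hrange hy
      rw [← f.map_smul, hr x (by simpa [hK, Submodule.mem_comap] using hy), f.map_zero]
    · intro hr x hx
      apply hf
      rw [f.map_smul, f.map_zero]
      exact hr (f x) hx
  constructor
  · rw [hannK]; exact hann
  · refine ⟨s, hsS, fun r => ?_⟩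
    rcases hs r with h1 | ⟨t, ht, h2⟩
    · left
      apply hinj
      rw [map_psmul_aux, map_psmul_aux, hmap, h1]
    · right
      refine ⟨t, ht, hinj ?_⟩
      rw [map_psmul_aux, hmap, h2, Submodule.map_bot]
end

section
/- Let M be a comultiplication R-module and N an S-secondary submodule of M with N ⊆ K + H for submodules K, H of M. Then there exists s ∈ S such that s·(0 :_M √(Ann_R(N))) ⊆ K or s·(0 :_M √(Ann_R(N))) ⊆ H. -/
open Pointwise

theorem stmt_18 {R : Type*} [CommRing R] {M : Type*} [AddCommGroup M] [Module R M]
    (S : Set R) (hS : MultClosedSet S)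
    (hcomult : ∀ K : Submodule R M, K = Submodule.torsionBySet R M (K.annihilator : Set R))
    (N : Submodule R M) (h : IsSSecondary S N)
    (K H : Submodule R M) (hKH : N ≤ K ⊔ H) :
    ∃ s ∈ S,
      s • Submodule.torsionBySet R M (N.annihilator.radical : Set R) ≤ K ∨
      s • Submodule.torsionBySet R M (N.annihilator.radical : Set R) ≤ H := by
  obtain ⟨hdisj, s, hsS, hsec⟩ := h
  refine ⟨s, hsS, ?_⟩
  by_contra hcon
  push_neg at hcon
  obtain ⟨hK, hH⟩ := hcon
  have key : ∀ L : Submodule R M,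
      ¬ s • Submodule.torsionBySet R M (N.annihilator.radical : Set R) ≤ L →
      ∃ a ∈ L.annihilator, (s * a) • N = s • N := by
    intro L hne
    rw [SetLike.not_le_iff_exists] at hne
    obtain ⟨x, hx, hxL⟩ := hne
    rw [← SetLike.mem_coe, Submodule.coe_pointwise_smul, Set.mem_smul_set] at hx
    obtain ⟨m, hm, rfl⟩ := hx
    rw [hcomult L, Submodule.mem_torsionBySet_iff] at hxL
    push_neg at hxL
    obtain ⟨a, ha⟩ := hxL
    refine ⟨a, a.2, ?_⟩
    rcases hsec a with h1 | ⟨t, _, h2⟩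
    · exact h1
    · exfalso
      apply ha
      have hrad : (s * (a : R)) ∈ N.annihilator.radical := by
        rw [Ideal.mem_radical_iff]
        refine ⟨t, ?_⟩
        rw [Submodule.mem_annihilator]
        intro n hn
        have : (s * (a : R)) ^ t • n ∈ ((s * (a : R)) ^ t) • N :=
          Submodule.smul_mem_pointwise_smul n _ N hn
        rw [h2] at this
        simpa using this
      have := (Submodule.mem_torsionBySet_iff _ m).mp hm ⟨s * a, hrad⟩
      simp only [Subtype.coe_mk] at this ⊢
      calc (a : R) • s • m = (s * (a : R)) • m := by
            rw [mul_comm, mul_smul]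
        _ = 0 := this
  obtain ⟨a, haK, hA⟩ := key K hK
  obtain ⟨b, hbH, hB⟩ := key H hH
  -- a * b annihilates N
  have hab : (a * b) • N = (⊥ : Submodule R M) := by
    rw [eq_bot_iff]
    intro x hx
    rw [← SetLike.mem_coe, Submodule.coe_pointwise_smul, Set.mem_smul_set] at hx
    obtain ⟨n, hn, rfl⟩ := hx
    obtain ⟨k, hk, hmem, hhm, rfl⟩ := Submodule.mem_sup.mp (hKH hn)
    have h1 : (a * b) • k = 0 := by
      rw [mul_comm, mul_smul, Submodule.mem_annihilator.mp haK k hk, smul_zero]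
    have h2 : (a * b) • hmem = 0 := by
      rw [mul_smul, Submodule.mem_annihilator.mp hbH hmem hhm, smul_zero]
    simp [smul_add, h1, h2]
  have hsN : s • N = (⊥ : Submodule R M) := by
    have : s • N = (b * (s * a)) • N := by
      rw [mul_smul, hA, ← mul_smul, mul_comm, hB]
    rw [this]
    have : (b * (s * a)) = s * (a * b) := by ring
    rw [this, mul_smul, hab, Submodule.smul_bot']
  have hsmem : s ∈ N.annihilator.radical := by
    apply Ideal.le_radical
    rw [Submodule.mem_annihilator]
    intro n hn
    have : s • n ∈ s • N := Submodule.smul_mem_pointwise_smul n s N hn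
    rw [hsN] at this
    simpa using this
  have : s ∈ (N.annihilator.radical : Set R) ∩ S := ⟨hsmem, hsS⟩
  rw [hdisj] at this
  exact this
end
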